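/- Let d ≥ 1, b ∈ ℝ^d with b ≠ 0, and h > 0. Then the inequality e^{−Σ_{ℓ=1}^d x_ℓ} · ( 1 + h (Σ_{ℓ=1}^d b_ℓ √x_ℓ)² ) ≤ 1 holds for every x ∈ [0,∞)^d if and only if |b|_∞² h ≤ 1. Consequently, when the driver f(y,z) = Σ_{ℓ=1}^d b_ℓ z^ℓ depends only on z (a = 0), the implicit Euler scheme is Von Neumann stable if and only if |b|_∞² h ≤ 1. -/

import Mathlib

/-!
Testing the inequality on `x = t • (b⁺)²` and `x = t • (b⁻)²` turns it into
`1 + h S² t ≤ e^{S t}` for all `t ≥ 0`, with `S = |b⁺|²` resp. `|b⁻|²`; comparing derivatives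
at `t = 0` gives `h S ≤ 1`. Conversely, `Σ b_ℓ √x_ℓ` is the sum of a nonnegative and a
nonpositive term, each bounded by Cauchy–Schwarz, so `h (Σ b_ℓ √x_ℓ)² ≤ |b|_∞² h Σ x_ℓ ≤ Σ x_ℓ`,
and `e^{-s} (1 + s) ≤ 1`.
-/

/-- For `b ∈ ℝ^d`, `|b|_∞ := max(|b⁺|, |b⁻|)` where `b⁺ = (b₁ ∨ 0, …, b_d ∨ 0)`,
`b⁻ = (b₁ ∧ 0, …, b_d ∧ 0)` and `|·|` is the Euclidean norm. -/
noncomputable def bInfty {d : ℕ} (b : Fin d → ℝ) : ℝ :=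
  max (Real.sqrt (∑ ℓ, max (b ℓ) 0 ^ 2)) (Real.sqrt (∑ ℓ, min (b ℓ) 0 ^ 2))

open Filter Topology Finset Real

lemma le_of_forall_one_add_mul_le_exp_mul {a c : ℝ}
    (H : ∀ t : ℝ, 0 < t → 1 + a * t ≤ exp (c * t)) : a ≤ c := by
  have hderiv : HasDerivAt (fun t => exp (c * t)) c 0 := by
    simpa using ((hasDerivAt_id (0 : ℝ)).const_mul c).exp
  have hslope : Tendsto (slope (fun t => exp (c * t)) 0) (𝓝[>] 0) (𝓝 c) :=
    (hasDerivAt_iff_tendsto_slope.mp hderiv).mono_left (nhdsGT_le_nhdsNE 0)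
  refine ge_of_tendsto hslope (eventually_nhdsWithin_of_forall fun t (ht : 0 < t) => ?_)
  rw [slope_def_field, mul_zero, exp_zero, sub_zero, le_div_iff₀ ht]
  linarith [H t ht]

lemma exp_neg_mul_one_add_le_one (s : ℝ) : exp (-s) * (1 + s) ≤ 1 := by
  calc exp (-s) * (1 + s) ≤ exp (-s) * exp s := by
        gcongr; linarith [add_one_le_exp s]
    _ = 1 := by rw [← exp_add, neg_add_cancel, exp_zero]

lemma sq_add_le_max_sq {p n : ℝ} (hp : 0 ≤ p) (hn : n ≤ 0) :
    (p + n) ^ 2 ≤ max (p ^ 2) (n ^ 2) := by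
  rcases le_total 0 (p + n) with hpn | hpn
  · exact le_max_of_le_left (by nlinarith)
  · exact le_max_of_le_right (by nlinarith)

lemma mul_max_zero_self (a : ℝ) : a * max a 0 = max a 0 ^ 2 := by
  rcases le_total a 0 with ha | ha <;> simp [ha, sq]

lemma mul_min_zero_self (a : ℝ) : a * min a 0 = min a 0 ^ 2 := by
  rcases le_total a 0 with ha | ha <;> simp [ha, sq]

lemma mul_le_one_of_mul_sq_le {S h : ℝ} (hS : 0 ≤ S) (H : h * S ^ 2 ≤ S) : S * h ≤ 1 := by
  rcases hS.eq_or_lt with rfl | hS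
  · simp
  · nlinarith

section

variable {ι : Type*} [Fintype ι]

def VonNeumannStable (b : ι → ℝ) (h : ℝ) : Prop :=
  ∀ x : ι → ℝ, (∀ ℓ, 0 ≤ x ℓ) → exp (-∑ ℓ, x ℓ) * (1 + h * (∑ ℓ, b ℓ * √(x ℓ)) ^ 2) ≤ 1

lemma sq_sum_mul_sqrt_le (b x : ι → ℝ) (hx : ∀ ℓ, 0 ≤ x ℓ) :
    (∑ ℓ, b ℓ * √(x ℓ)) ^ 2 ≤
      max (∑ ℓ, max (b ℓ) 0 ^ 2) (∑ ℓ, min (b ℓ) 0 ^ 2) * ∑ ℓ, x ℓ := by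
  have hsplit : ∑ ℓ, b ℓ * √(x ℓ) =
      ∑ ℓ, max (b ℓ) 0 * √(x ℓ) + ∑ ℓ, min (b ℓ) 0 * √(x ℓ) := by
    rw [← sum_add_distrib]
    refine sum_congr rfl fun ℓ _ => ?_
    rw [← add_mul, add_comm, min_add_max, add_zero]
  have hsq : ∑ ℓ, √(x ℓ) ^ 2 = ∑ ℓ, x ℓ := sum_congr rfl fun ℓ _ => sq_sqrt (hx ℓ)
  have hpos := sum_mul_sq_le_sq_mul_sq univ (fun ℓ => max (b ℓ) 0) fun ℓ => √(x ℓ)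
  have hneg := sum_mul_sq_le_sq_mul_sq univ (fun ℓ => min (b ℓ) 0) fun ℓ => √(x ℓ)
  rw [hsq] at hpos hneg
  rw [hsplit, max_mul_of_nonneg _ _ (sum_nonneg fun ℓ _ => hx ℓ)]
  refine (sq_add_le_max_sq ?_ ?_).trans (max_le_max hpos hneg)
  · exact sum_nonneg fun ℓ _ => mul_nonneg (le_max_right _ _) (sqrt_nonneg _)
  · exact sum_nonpos fun ℓ _ => mul_nonpos_of_nonpos_of_nonneg (min_le_right _ _) (sqrt_nonneg _)

lemma vonNeumannStable_of_max_mul_le_one {b : ι → ℝ} {h : ℝ} (hh : 0 ≤ h)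
    (hM : max (∑ ℓ, max (b ℓ) 0 ^ 2) (∑ ℓ, min (b ℓ) 0 ^ 2) * h ≤ 1) :
    VonNeumannStable b h := by
  intro x hx
  have hs : 0 ≤ ∑ ℓ, x ℓ := sum_nonneg fun ℓ _ => hx ℓ
  have hbound : h * (∑ ℓ, b ℓ * √(x ℓ)) ^ 2 ≤ ∑ ℓ, x ℓ := by
    calc h * (∑ ℓ, b ℓ * √(x ℓ)) ^ 2
        ≤ h * (max (∑ ℓ, max (b ℓ) 0 ^ 2) (∑ ℓ, min (b ℓ) 0 ^ 2) * ∑ ℓ, x ℓ) := by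
          gcongr; exact sq_sum_mul_sqrt_le b x hx
      _ ≤ ∑ ℓ, x ℓ := by nlinarith
  calc exp (-∑ ℓ, x ℓ) * (1 + h * (∑ ℓ, b ℓ * √(x ℓ)) ^ 2)
      ≤ exp (-∑ ℓ, x ℓ) * (1 + ∑ ℓ, x ℓ) := by gcongr
    _ ≤ 1 := exp_neg_mul_one_add_le_one _

lemma VonNeumannStable.mul_sq_sum_mul_le_sum_sq {b : ι → ℝ} {h : ℝ} (H : VonNeumannStable b h)
    (w : ι → ℝ) (hw : ∀ ℓ, 0 ≤ w ℓ) :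
    h * (∑ ℓ, b ℓ * w ℓ) ^ 2 ≤ ∑ ℓ, w ℓ ^ 2 := by
  refine le_of_forall_one_add_mul_le_exp_mul fun t ht => ?_
  have hsqrt : ∀ ℓ, √(t * w ℓ ^ 2) = √t * w ℓ := fun ℓ => by
    rw [sqrt_mul ht.le, sqrt_sq (hw ℓ)]
  have := H (fun ℓ => t * w ℓ ^ 2) fun ℓ => by positivity
  simp only [hsqrt, mul_left_comm _ √t, ← mul_sum] at this
  rw [mul_pow, sq_sqrt ht.le, exp_neg, inv_mul_le_iff₀ (exp_pos _), mul_one] at this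
  rw [mul_comm _ t, mul_comm _ t]
  linarith

lemma VonNeumannStable.max_mul_le_one {b : ι → ℝ} {h : ℝ} (H : VonNeumannStable b h)
    (hh : 0 ≤ h) : max (∑ ℓ, max (b ℓ) 0 ^ 2) (∑ ℓ, min (b ℓ) 0 ^ 2) * h ≤ 1 := by
  have hpos := H.mul_sq_sum_mul_le_sum_sq (fun ℓ => max (b ℓ) 0) fun ℓ => le_max_right _ _
  have hneg := H.mul_sq_sum_mul_le_sum_sq (fun ℓ => -min (b ℓ) 0) fun ℓ => by simp
  simp only [mul_max_zero_self, mul_neg, mul_min_zero_self, sum_neg_distrib, neg_sq] at hpos hneg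
  rw [max_mul_of_nonneg _ _ hh]
  exact max_le (mul_le_one_of_mul_sq_le (sum_nonneg fun ℓ _ => sq_nonneg _) hpos)
    (mul_le_one_of_mul_sq_le (sum_nonneg fun ℓ _ => sq_nonneg _) hneg)

end

lemma bInfty_sq {d : ℕ} (b : Fin d → ℝ) :
    bInfty b ^ 2 = max (∑ ℓ, max (b ℓ) 0 ^ 2) (∑ ℓ, min (b ℓ) 0 ^ 2) := by
  rw [bInfty, ← Monotone.map_max fun _ _ => sqrt_le_sqrt,
    sq_sqrt (le_max_of_le_left (sum_nonneg fun ℓ _ => sq_nonneg _))]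

theorem von_neumann_criterion_implicit_a_eq_zero_general (d : ℕ)
    (b : Fin d → ℝ) (h : ℝ) (hh : 0 < h) :
    (∀ x : Fin d → ℝ, (∀ ℓ, 0 ≤ x ℓ) →
        Real.exp (-∑ ℓ, x ℓ) * (1 + h * (∑ ℓ, b ℓ * Real.sqrt (x ℓ)) ^ 2) ≤ 1)
      ↔ bInfty b ^ 2 * h ≤ 1 := by
  rw [bInfty_sq]
  exact ⟨fun H => VonNeumannStable.max_mul_le_one H hh.le,
    vonNeumannStable_of_max_mul_le_one hh.le⟩

/-- Von Neumann stability of the implicit Euler scheme for a driver depending only on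
`z` (`a = 0`): the inequality `e^{-Σ x_ℓ} (1 + h (Σ b_ℓ √x_ℓ)²) ≤ 1` holds on the whole
nonnegative orthant if and only if `|b|_∞² h ≤ 1`. -/
theorem von_neumann_criterion_implicit_a_eq_zero (d : ℕ) (hd : 1 ≤ d)
    (b : Fin d → ℝ) (hb : b ≠ 0) (h : ℝ) (hh : 0 < h) :
    (∀ x : Fin d → ℝ, (∀ ℓ, 0 ≤ x ℓ) →
        Real.exp (-∑ ℓ, x ℓ) * (1 + h * (∑ ℓ, b ℓ * Real.sqrt (x ℓ)) ^ 2) ≤ 1)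
      ↔ bInfty b ^ 2 * h ≤ 1 :=
  von_neumann_criterion_implicit_a_eq_zero_general d b h hh
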